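/- Fix n ≥ 1. Let q : ℚ → Prop model a query over the single parameter of the top-level service, let ψ : ℚ → (Fin n → ℚ) → Prop model the rule's condition relating the top-level parameter to the n sub-service parameters, and let r : Fin n → ℚ → Prop model the offers received from the n sub-negotiators. For each i : Fin n define the sub-query Q i : ℚ → Prop by Q i z := ∃ x (y : Fin n → ℚ), y i = z ∧ q x ∧ ψ x y ∧ (∀ j : Fin n, j < i → r j (y j)), and define the final offer R : ℚ → Prop by R x := ∃ y : Fin n → ℚ, ψ x y ∧ ∀ i : Fin n, r i (y i). If the last sub-offer intersects the last sub-query, i.e. ∃ z, Q ⟨n-1, _⟩ z ∧ r ⟨n-1, _⟩ z, then the final offer intersects the original query, i.e. ∃ x, q x ∧ R x. -/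

import Mathlib

theorem IsTop.forall_of_forall_lt {α : Type*} [PartialOrder α] {a : α} (ha : IsTop a)
    {P : α → Prop} (hlt : ∀ b < a, P b) (ha' : P a) (b : α) : P b :=
  (ha b).lt_or_eq.elim (hlt b) fun hb => hb ▸ ha'

theorem Fin.isTop_sub_one {n : ℕ} (hn : n - 1 < n) : IsTop (⟨n - 1, hn⟩ : Fin n) :=
  fun i => Fin.le_def.2 (Nat.le_sub_one_of_lt i.isLt)

theorem rule_correctness_n_subnegotiators
    (n : ℕ) (hn : 1 ≤ n)
    (q : ℚ → Prop) (ψ : ℚ → (Fin n → ℚ) → Prop) (r : Fin n → ℚ → Prop)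
    (Q : Fin n → ℚ → Prop)
    (hQ : ∀ (i : Fin n) (z : ℚ),
      Q i z ↔ ∃ (x : ℚ) (y : Fin n → ℚ),
        y i = z ∧ q x ∧ ψ x y ∧ (∀ j : Fin n, j < i → r j (y j)))
    (R : ℚ → Prop)
    (hR : ∀ x : ℚ, R x ↔ ∃ y : Fin n → ℚ, ψ x y ∧ ∀ i : Fin n, r i (y i))
    (h : ∃ z : ℚ, Q ⟨n - 1, by omega⟩ z ∧ r ⟨n - 1, by omega⟩ z) :
    ∃ x, q x ∧ R x := by
  obtain ⟨z, hQz, hrz⟩ := h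
  obtain ⟨x, y, rfl, hqx, hψ, hprev⟩ := (hQ _ z).1 hQz
  exact ⟨x, hqx, (hR x).2 ⟨y, hψ, (Fin.isTop_sub_one _).forall_of_forall_lt hprev hrz⟩⟩
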